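/- arXiv:math/0003031 — 3 statements merged into one kernel-verified Lean document; each statement's English description precedes it below -/
import Mathlib

section
/- Giambelli formula: for every partition μ = (p_1,…,p_d | q_1,…,q_d) (Frobenius notation, d = d(μ)) and every n ≥ 1, the identity s_{μ;a} = det[s_{(p_i|q_j);a}]_{i,j=1}^{d} holds in ℂ[x_1,…,x_n]. -/
open MvPolynomial Finset

noncomputable section

/-- dual parameter sequence: `â i = - a (-i + 1)`. -/
def dualSeq (a : ℤ → ℂ) : ℤ → ℂ := fun i => -a (-i + 1)

/-- shifted sequence `(τ^r a) i = a (i + r)`. -/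
def shiftSeq (r : ℤ) (a : ℤ → ℂ) : ℤ → ℂ := fun i => a (i + r)

/-- elementary symmetric polynomial `e_deg (a 1, …, a num)` of complex numbers. -/
def eSeq (a : ℤ → ℂ) (num deg : ℕ) : ℂ :=
  ∑ S ∈ Finset.powersetCard deg (Finset.range num), ∏ i ∈ S, a ((i : ℤ) + 1)

/-- `h_{k;a}` in `ℂ[x_1,…,x_n]`: `Σ_{i=1}^k (-1)^{k-i} e_{k-i}(a_1,…,a_{k-1}) h_i`;
`1` for `k = 0`, `0` for `k < 0`. -/
def hkaP (a : ℤ → ℂ) (n : ℕ) (k : ℤ) : MvPolynomial (Fin n) ℂ :=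
  if k < 0 then 0 else if k = 0 then 1 else
  ∑ i ∈ Finset.Icc 1 k.toNat,
    C ((-1) ^ (k.toNat - i) * eSeq a (k.toNat - 1) (k.toNat - i)) * hsymm (Fin n) ℂ i

/-- the multiparameter Schur polynomial `s_{μ;a}` in `ℂ[x_1,…,x_n]`, defined as
`det [h_{μ_i - i + j; τ^{1-j} a}]` of size `ℓ(μ) × ℓ(μ)`. -/
def sMuP (a : ℤ → ℂ) (μ : YoungDiagram) (n : ℕ) : MvPolynomial (Fin n) ℂ :=
  Matrix.det (Matrix.of fun i j : Fin (μ.colLen 0) =>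
    hkaP (shiftSeq (-(j : ℤ)) a) n ((μ.rowLen i : ℤ) - i + j))

/-- number of diagonal cells `d(μ)` of a Young diagram. -/
def dep (μ : YoungDiagram) : ℕ := (μ.cells.filter (fun c => c.1 = c.2)).card

/-- Frobenius coordinate `p_i(μ) = μ_{i+1} - (i+1)` (0-indexed `i`). -/
def pF (μ : YoungDiagram) (i : ℕ) : ℕ := μ.rowLen i - (i + 1)

/-- Frobenius coordinate `q_i(μ) = μ'_{i+1} - (i+1)` (0-indexed `i`). -/
def qF (μ : YoungDiagram) (i : ℕ) : ℕ := μ.colLen i - (i + 1)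

/-- the hook Young diagram `(p|q) = (p+1, 1^q)`. -/
def hookYD (p q : ℕ) : YoungDiagram where
  cells := (Finset.range (q + 1) ×ˢ Finset.range (p + 1)).filter
    (fun c => c.1 = 0 ∨ c.2 = 0)
  isLowerSet := by
    intro c1 c2 hle hc1
    simp only [Finset.coe_filter, Finset.mem_product, Finset.mem_range, Set.mem_setOf_eq,
      Finset.mem_coe] at *
    obtain ⟨h1, h2⟩ := hle
    omega

/-!
Let `B` be the upper unitriangular matrix `B k j = h_{j-k; τ^{-j} a}`. Row `i ≥ d` of the
Jacobi–Trudi matrix of `μ` is row `i - μᵢ` of `B`, and row `i < d` is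
`vᵢ = (h_{j+pᵢ+1; τ^{-j} a})ⱼ = cᵢ B`. So the Jacobi–Trudi matrix is `C B`, where row `i` of `C`
is `cᵢ` for `i < d` and the unit vector `e_{i-μᵢ}` for `i ≥ d`. Since `{qⱼ}` and
`{i - μᵢ : i ≥ d}` partition `ℕ`, this gives `s_μ = (-1)^{Σ qⱼ} det [cᵢ(qⱼ)]`. For a hook this
reads `s_{(p|q)} = (-1)^q c_p(q)`, and Giambelli follows by taking the signs out of the columns.
-/

section Determinant

open Matrix

variable {R : Type*} [CommRing R]

theorem Matrix.det_eq_det_submatrix_castLE {N k : ℕ} (M : Matrix (Fin N) (Fin N) R) (hk : k ≤ N)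
    (hM : ∀ i j : Fin N, k ≤ (i : ℕ) → j ≤ i → M i j = if j = i then 1 else 0) :
    M.det = (M.submatrix (Fin.castLE hk) (Fin.castLE hk)).det := by
  obtain ⟨m, rfl⟩ := Nat.exists_eq_add_of_le hk
  set M' := reindex finSumFinEquiv.symm finSumFinEquiv.symm M
  have hM'₂₁ : M'.toBlocks₂₁ = 0 := by
    ext i j
    have := hM (Fin.natAdd k i) (Fin.castAdd m j) (by simp)
      (Fin.le_def.2 (by simp only [Fin.val_castAdd, Fin.val_natAdd]; omega))
    rw [if_neg (by simp only [Fin.ext_iff, Fin.val_castAdd, Fin.val_natAdd]; omega)] at this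
    simpa [M', toBlocks₂₁] using this
  have hM'₂₂ : M'.toBlocks₂₂.det = 1 := by
    rw [det_of_isUpperTriangular]
    · refine Finset.prod_eq_one fun i _ => ?_
      simpa [M', toBlocks₂₂] using hM (Fin.natAdd k i) (Fin.natAdd k i) (by simp) le_rfl
    · intro i j (hji : j < i)
      have := hM (Fin.natAdd k i) (Fin.natAdd k j) (by simp)
        (Fin.le_def.2 (by simp only [Fin.val_natAdd]; omega))
      simpa [M', toBlocks₂₂, hji.ne] using this
  rw [← det_reindex_self finSumFinEquiv.symm M]
  change M'.det = _
  rw [← fromBlocks_toBlocks M', hM'₂₁, det_fromBlocks_zero₂₁, hM'₂₂, mul_one]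
  rfl

theorem Matrix.det_eq_sign_mul_det_of_rows_eq {N k : ℕ} (M B : Matrix (Fin N) (Fin N) R)
    (hB : B.det = 1) (σ : Equiv.Perm (Fin N)) (hk : k ≤ N)
    (hM : ∀ i : Fin N, k ≤ (i : ℕ) → M i = B (σ i)) :
    M.det = Equiv.Perm.sign σ *
      (of fun s t : Fin k => (M * B⁻¹) (Fin.castLE hk s) (σ (Fin.castLE hk t))).det := by
  set C := M * B⁻¹
  have hBunit : IsUnit B.det := hB ▸ isUnit_one
  have hMC : M = C * B := by rw [mul_assoc, nonsing_inv_mul _ hBunit, mul_one]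
  have hC : ∀ i j : Fin N, k ≤ (i : ℕ) → C i j = if σ i = j then 1 else 0 := by
    intro i j hi
    calc C i j = (B * B⁻¹) (σ i) j := by simp only [C, mul_apply, hM i hi]
      _ = _ := by rw [mul_nonsing_inv _ hBunit, one_apply]
  have hCσ : C.det = Equiv.Perm.sign σ * (C.submatrix id σ).det := by
    rw [det_permute', ← mul_assoc, ← Int.cast_mul, ← Units.val_mul, Int.units_mul_self]
    simp
  rw [hMC, det_mul, hB, mul_one, hCσ,
    det_eq_det_submatrix_castLE (C.submatrix id σ) hk fun i j hi _ => by
      simp [hC _ _ hi, eq_comm]]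
  rfl

end Determinant

theorem Equiv.Perm.card_filter_lt_apply {N : ℕ} (σ : Equiv.Perm (Fin N)) (i : Fin N) :
    #{j | σ j < σ i} = σ i := by
  have : ({j | σ j < σ i} : Finset (Fin N)) = (Iio (σ i)).map σ.symm.toEmbedding := by
    ext j
    simp
  rw [this, card_map, Fin.card_Iio]

theorem Equiv.Perm.sign_eq_neg_one_pow_sum_of_strictAntiOn_of_strictMonoOn {N k : ℕ}
    (σ : Equiv.Perm (Fin N)) (hk : k ≤ N) (hanti : StrictAntiOn σ {i | (i : ℕ) < k})
    (hmono : StrictMonoOn σ {i | k ≤ (i : ℕ)}) :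
    Equiv.Perm.sign σ = (-1) ^ ∑ i : Fin k, (σ (Fin.castLE hk i) : ℕ) := by
  have hrow : ∀ i, ∏ j ∈ Ioi i, (if σ i < σ j then 1 else -1 : ℤˣ) =
      if (i : ℕ) < k then (-1) ^ (σ i : ℕ) else 1 := by
    intro i
    split_ifs with hi
    -- the inversions `(i, j)`, `i < j`, are all `j` with `σ j < σ i`; there are `σ i` of them
    · have hinv : (Ioi i).filter (fun j => ¬ σ i < σ j) = univ.filter (fun j => σ j < σ i) := by
        ext j
        simp only [mem_filter, mem_Ioi, mem_univ, true_and, not_lt]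
        constructor
        · rintro ⟨hij, hle⟩
          exact lt_of_le_of_ne hle (σ.injective.ne hij.ne')
        · intro hlt
          refine ⟨lt_of_not_ge fun hji => ?_, hlt.le⟩
          rcases hji.lt_or_eq with hji | rfl
          · exact (hanti (by simp only [Set.mem_ofPred_eq]; omega) hi hji).not_gt hlt
          · exact hlt.false
      rw [prod_ite, prod_const_one, one_mul, prod_const, hinv, σ.card_filter_lt_apply]
    · exact prod_eq_one fun j hj => if_pos <|
        hmono (le_of_not_gt hi) (by simp only [Set.mem_ofPred_eq]; have := mem_Ioi.1 hj; omega)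
          (mem_Ioi.1 hj)
  obtain ⟨m, rfl⟩ := Nat.exists_eq_add_of_le hk
  rw [sign_eq_prod_prod_Ioi, prod_congr rfl fun i _ => hrow i, Fin.prod_univ_add]
  simp only [Fin.val_castAdd, Fin.is_lt, if_true, Fin.val_natAdd, add_lt_iff_neg_left,
    not_lt_zero, if_false, prod_const_one, mul_one, prod_pow_eq_pow_sum]
  rfl

section Frobenius

variable (μ : YoungDiagram)

theorem mem_diag_iff_lt_dep (i : ℕ) : (i, i) ∈ μ ↔ i < dep μ := by
  classical
  set D := (μ.cells.filter fun c => c.1 = c.2).image Prod.fst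
  have hD : ∀ i, i ∈ D ↔ (i, i) ∈ μ := by
    intro i
    simp only [D, Finset.mem_image, Finset.mem_filter, YoungDiagram.mem_cells]
    constructor
    · rintro ⟨⟨x, y⟩, ⟨hxy, rfl : x = y⟩, rfl⟩
      exact hxy
    · exact fun h => ⟨(i, i), ⟨h, rfl⟩, rfl⟩
  have hcard : D.card = dep μ :=
    Finset.card_image_of_injOn fun c hc c' hc' h => by
      simp only [Finset.coe_filter, Set.mem_ofPred_eq] at hc hc'
      exact Prod.ext h (by rw [← hc.2, ← hc'.2, h])
  have hlower : IsLowerSet (D : Set ℕ) := fun x y hyx hx => by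
    simp only [Finset.mem_coe, hD] at hx ⊢
    exact μ.up_left_mem hyx hyx hx
  obtain ⟨a, ha⟩ :=
    hlower.eq_univ_or_Iio.resolve_left fun h => Set.infinite_univ (h ▸ D.finite_toSet)
  rw [← Finset.coe_range, Finset.coe_inj] at ha
  rw [← hD, ← hcard, ha, Finset.mem_range, Finset.card_range]

theorem rowLen_le_of_dep_le {i : ℕ} (hi : dep μ ≤ i) : μ.rowLen i ≤ i := by
  by_contra! h
  exact (not_lt.2 hi) ((mem_diag_iff_lt_dep μ i).1 (YoungDiagram.mem_iff_lt_rowLen.2 h))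

theorem lt_colLen_of_lt_dep {i : ℕ} (hi : i < dep μ) : i < μ.colLen i :=
  YoungDiagram.mem_iff_lt_colLen.1 ((mem_diag_iff_lt_dep μ i).2 hi)

theorem dep_le_colLen : dep μ ≤ μ.colLen 0 := by
  rcases Nat.eq_zero_or_pos (dep μ) with h | h
  · omega
  have := lt_colLen_of_lt_dep μ (i := dep μ - 1) (by omega)
  have := μ.colLen_anti 0 (dep μ - 1) (Nat.zero_le _)
  omega

theorem qF_lt_colLen {j : ℕ} (hj : j < dep μ) : qF μ j < μ.colLen 0 := by
  have := lt_colLen_of_lt_dep μ hj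
  have := μ.colLen_anti 0 j (Nat.zero_le _)
  rw [qF]
  omega

def frobeniusIndex (i : ℕ) : ℕ := if i < dep μ then qF μ i else i - μ.rowLen i

theorem frobeniusIndex_of_lt {i : ℕ} (hi : i < dep μ) : frobeniusIndex μ i = qF μ i :=
  if_pos hi

theorem frobeniusIndex_of_le {i : ℕ} (hi : dep μ ≤ i) : frobeniusIndex μ i = i - μ.rowLen i :=
  if_neg (not_lt.2 hi)

theorem frobeniusIndex_strictAntiOn : StrictAntiOn (frobeniusIndex μ) (Set.Iio (dep μ)) := by
  intro i hi j hj hij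
  simp only [Set.mem_Iio] at hi hj
  have := lt_colLen_of_lt_dep μ hj
  have := μ.colLen_anti i j hij.le
  simp only [frobeniusIndex, hi, hj, if_true, qF]
  omega

theorem frobeniusIndex_strictMonoOn : StrictMonoOn (frobeniusIndex μ) (Set.Ici (dep μ)) := by
  intro i hi j hj hij
  simp only [Set.mem_Ici] at hi hj
  have := rowLen_le_of_dep_le μ hi
  have := μ.rowLen_anti i j hij.le
  simp only [frobeniusIndex, if_neg (not_lt.2 hi), if_neg (not_lt.2 hj)]
  omega

theorem frobeniusIndex_ne {i j : ℕ} (hi : dep μ ≤ i) (hj : j < dep μ) :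
    frobeniusIndex μ i ≠ frobeniusIndex μ j := by
  have := rowLen_le_of_dep_le μ hi
  have := lt_colLen_of_lt_dep μ hj
  simp only [frobeniusIndex, if_neg (not_lt.2 hi), if_pos hj, qF]
  by_cases hij : (i, j) ∈ μ
  · have := YoungDiagram.mem_iff_lt_rowLen.1 hij
    have := YoungDiagram.mem_iff_lt_colLen.1 hij
    omega
  · rw [YoungDiagram.mem_iff_lt_rowLen, not_lt] at hij
    have : ¬ i < μ.colLen j := fun h => by
      have := YoungDiagram.mem_iff_lt_rowLen.1 (YoungDiagram.mem_iff_lt_colLen.2 h)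
      omega
    omega

theorem frobeniusIndex_injective : Function.Injective (frobeniusIndex μ) := by
  intro i j hij
  by_contra hne
  wlog hlt : i < j generalizing i j
  · exact this hij.symm (Ne.symm hne) (by omega)
  rcases lt_or_ge j (dep μ) with hj | hj
  · exact (frobeniusIndex_strictAntiOn μ (lt_trans hlt hj) hj hlt).ne' hij
  rcases lt_or_ge i (dep μ) with hi | hi
  · exact frobeniusIndex_ne μ hj hi hij.symm
  · exact (frobeniusIndex_strictMonoOn μ hi hj hlt).ne hij

theorem frobeniusIndex_lt {ℓ i : ℕ} (hℓ : μ.colLen 0 ≤ ℓ) (hi : i < ℓ) :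
    frobeniusIndex μ i < ℓ := by
  unfold frobeniusIndex
  split_ifs with h
  · exact (qF_lt_colLen μ h).trans_le hℓ
  · omega

def frobeniusPerm (ℓ : ℕ) (hℓ : μ.colLen 0 ≤ ℓ) : Equiv.Perm (Fin ℓ) :=
  Equiv.ofBijective (fun i => ⟨frobeniusIndex μ i, frobeniusIndex_lt μ hℓ i.2⟩) <|
    Finite.injective_iff_bijective.1 fun _ _ h =>
      Fin.ext (frobeniusIndex_injective μ (congrArg Fin.val h))

theorem frobeniusPerm_apply_val {ℓ : ℕ} (hℓ : μ.colLen 0 ≤ ℓ) (i : Fin ℓ) :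
    (frobeniusPerm μ ℓ hℓ i : ℕ) = frobeniusIndex μ i :=
  rfl

theorem sign_frobeniusPerm {ℓ : ℕ} (hℓ : μ.colLen 0 ≤ ℓ) :
    Equiv.Perm.sign (frobeniusPerm μ ℓ hℓ) = (-1) ^ ∑ t : Fin (dep μ), qF μ t := by
  rw [Equiv.Perm.sign_eq_neg_one_pow_sum_of_strictAntiOn_of_strictMonoOn _
    ((dep_le_colLen μ).trans hℓ)]
  · refine congrArg _ (sum_congr rfl fun t _ => ?_)
    rw [frobeniusPerm_apply_val, Fin.val_castLE, frobeniusIndex_of_lt μ t.2]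
  · exact fun i hi j hj hij => frobeniusIndex_strictAntiOn μ hi hj hij
  · exact fun i hi j hj hij => frobeniusIndex_strictMonoOn μ hi hj hij

end Frobenius

section JacobiTrudi

open Matrix

variable (a : ℤ → ℂ) (n : ℕ)

/-- Row `i` of the Jacobi–Trudi matrix of `μ` is `jtEntry a n (i - μᵢ)`. -/
def jtEntry (r : ℤ) (j : ℕ) : MvPolynomial (Fin n) ℂ :=
  hkaP (shiftSeq (-(j : ℤ)) a) n (j - r)

theorem jtEntry_of_le {i j : ℕ} (hji : j ≤ i) : jtEntry a n i j = if j = i then 1 else 0 := by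
  rcases hji.lt_or_eq with h | rfl
  · rw [if_neg h.ne, jtEntry, hkaP, if_pos (by omega)]
  · rw [if_pos rfl, jtEntry, hkaP, if_neg (by omega), if_pos (by omega)]

def jtBase (ℓ : ℕ) : Matrix (Fin ℓ) (Fin ℓ) (MvPolynomial (Fin n) ℂ) :=
  of fun k j => jtEntry a n k j

theorem det_jtBase (ℓ : ℕ) : (jtBase a n ℓ).det = 1 := by
  rw [det_of_isUpperTriangular]
  · exact Finset.prod_eq_one fun i _ => by simp [jtBase, jtEntry_of_le]
  · intro i j (hji : j < i)
    simp [jtBase, jtEntry_of_le a n hji.le, Fin.val_ne_of_ne hji.ne]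

def jtMatrix (μ : YoungDiagram) (ℓ : ℕ) : Matrix (Fin ℓ) (Fin ℓ) (MvPolynomial (Fin n) ℂ) :=
  of fun i j => jtEntry a n ((i : ℤ) - μ.rowLen i) j

theorem sMuP_eq_det_jtMatrix (μ : YoungDiagram) {ℓ : ℕ} (hℓ : μ.colLen 0 ≤ ℓ) :
    sMuP a μ n = (jtMatrix a n μ ℓ).det := by
  rw [det_eq_det_submatrix_castLE _ hℓ]
  · unfold sMuP jtMatrix jtEntry
    congr 1
    ext i j : 1
    simp only [of_apply, submatrix_apply, Fin.val_castLE]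
    congr 1
    ring
  · intro i j hi hji
    have : μ.rowLen i = 0 := by
      rw [← Nat.le_zero, ← not_lt, ← YoungDiagram.mem_iff_lt_rowLen,
        YoungDiagram.mem_iff_lt_colLen]
      omega
    simp [jtMatrix, this, jtEntry_of_le a n (Fin.le_def.1 hji), Fin.ext_iff]

def hookCoeff (ℓ p : ℕ) (k : Fin ℓ) : MvPolynomial (Fin n) ℂ :=
  vecMul (fun j : Fin ℓ => jtEntry a n (-(p + 1 : ℤ)) j) (jtBase a n ℓ)⁻¹ k

theorem jtMatrix_apply_of_lt_dep (μ : YoungDiagram) {ℓ : ℕ} {i : Fin ℓ} (hi : (i : ℕ) < dep μ) :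
    jtMatrix a n μ ℓ i = fun j : Fin ℓ => jtEntry a n (-(pF μ i + 1 : ℤ)) j := by
  have := YoungDiagram.mem_iff_lt_rowLen.1 ((mem_diag_iff_lt_dep μ i).2 hi)
  funext j
  rw [jtMatrix, of_apply, pF]
  congr 1
  omega

theorem jtMatrix_apply_of_dep_le (μ : YoungDiagram) {ℓ : ℕ} (hℓ : μ.colLen 0 ≤ ℓ) {i : Fin ℓ}
    (hi : dep μ ≤ (i : ℕ)) : jtMatrix a n μ ℓ i = jtBase a n ℓ (frobeniusPerm μ ℓ hℓ i) := by
  funext j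
  rw [jtMatrix, jtBase, of_apply, of_apply, frobeniusPerm_apply_val, frobeniusIndex_of_le μ hi,
    Nat.cast_sub (rowLen_le_of_dep_le μ hi)]

theorem sMuP_eq_det_hookCoeff (μ : YoungDiagram) {ℓ : ℕ} (hℓ : μ.colLen 0 ≤ ℓ) :
    sMuP a μ n = (-1) ^ (∑ t : Fin (dep μ), qF μ t) *
      (of fun s t : Fin (dep μ) =>
        hookCoeff a n ℓ (pF μ s) ⟨qF μ t, (qF_lt_colLen μ t.2).trans_le hℓ⟩).det := by
  have hd : dep μ ≤ ℓ := (dep_le_colLen μ).trans hℓ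
  rewrite [sMuP_eq_det_jtMatrix a n μ hℓ,
    det_eq_sign_mul_det_of_rows_eq (jtMatrix a n μ ℓ) _ (det_jtBase a n ℓ) _ hd
      fun i hi => jtMatrix_apply_of_dep_le a n μ hℓ hi,
    sign_frobeniusPerm μ hℓ]
  refine congrArg₂ (· * ·) (by push_cast; rfl) (congrArg det (ext fun s t => ?_))
  have hcol : frobeniusPerm μ ℓ hℓ (Fin.castLE hd t) =
      ⟨qF μ t, (qF_lt_colLen μ t.2).trans_le hℓ⟩ :=
    Fin.ext (by rw [frobeniusPerm_apply_val, Fin.val_castLE, frobeniusIndex_of_lt μ t.2])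
  rw [of_apply, of_apply, hcol, mul_apply',
    jtMatrix_apply_of_lt_dep a n μ (i := Fin.castLE hd s) s.2]
  rfl

end JacobiTrudi

section Hook

variable {p q : ℕ}

theorem mem_hookYD {i j : ℕ} : (i, j) ∈ hookYD p q ↔ i ≤ q ∧ j ≤ p ∧ (i = 0 ∨ j = 0) := by
  change (i, j) ∈ (hookYD p q).cells ↔ _
  simp only [hookYD, Finset.mem_filter, Finset.mem_product, Finset.mem_range, Nat.lt_succ_iff,
    and_assoc]

theorem rowLen_hookYD_zero : (hookYD p q).rowLen 0 = p + 1 :=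
  eq_of_forall_lt_iff fun j => by rw [← YoungDiagram.mem_iff_lt_rowLen, mem_hookYD]; omega

theorem colLen_hookYD_zero : (hookYD p q).colLen 0 = q + 1 :=
  eq_of_forall_lt_iff fun i => by rw [← YoungDiagram.mem_iff_lt_colLen, mem_hookYD]; omega

theorem dep_hookYD : dep (hookYD p q) = 1 := by
  have h0 := (mem_diag_iff_lt_dep (hookYD p q) 0).1 (mem_hookYD.2 (by omega))
  have h1 := (mem_diag_iff_lt_dep (hookYD p q) 1).not.1 (by simp [mem_hookYD])
  omega

theorem sMuP_hookYD (a : ℤ → ℂ) (n : ℕ) {ℓ : ℕ} (hq : q < ℓ) :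
    sMuP a (hookYD p q) n = (-1) ^ q * hookCoeff a n ℓ p ⟨q, hq⟩ := by
  have hsum : ∑ t : Fin (dep (hookYD p q)), qF (hookYD p q) t = q := by
    rw [Fin.sum_univ_eq_sum_range (fun i => qF (hookYD p q) i), dep_hookYD]
    simp [qF, colLen_hookYD_zero]
  rw [sMuP_eq_det_hookCoeff a n _ (ℓ := ℓ) (by rw [colLen_hookYD_zero]; omega), hsum,
    ← Matrix.det_submatrix_equiv_self (finCongr dep_hookYD.symm), Matrix.det_fin_one]
  simp [pF, qF, rowLen_hookYD_zero, colLen_hookYD_zero]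

end Hook

open Matrix in
theorem sMuP_giambelli_general (a : ℤ → ℂ) (μ : YoungDiagram) (n : ℕ) :
    sMuP a μ n =
      Matrix.det (Matrix.of fun i j : Fin (dep μ) =>
        sMuP a (hookYD (pF μ i) (qF μ j)) n) := by
  have hq : ∀ j : Fin (dep μ), qF μ j < μ.colLen 0 := fun j => qF_lt_colLen μ j.2
  have hhooks : (of fun i j : Fin (dep μ) => sMuP a (hookYD (pF μ i) (qF μ j)) n) =
      of fun i j : Fin (dep μ) =>
        (-1) ^ qF μ j * hookCoeff a n (μ.colLen 0) (pF μ i) ⟨qF μ j, hq j⟩ :=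
    ext fun i j => sMuP_hookYD a n (hq j)
  rw [hhooks, sMuP_eq_det_hookCoeff a n μ le_rfl, ← Finset.prod_pow_eq_pow_sum, ← det_mul_row]
  rfl

/-- **Giambelli formula.** For `μ = (p_1,…,p_d | q_1,…,q_d)` and `n ≥ 1`:
`s_{μ;a} = det [s_{(p_i|q_j);a}]_{i,j=1}^d` in `ℂ[x_1,…,x_n]`. -/
theorem sMuP_giambelli (a : ℤ → ℂ) (μ : YoungDiagram) (n : ℕ) (hn : 1 ≤ n) :
    sMuP a μ n =
      Matrix.det (Matrix.of fun i j : Fin (dep μ) =>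
        sMuP a (hookYD (pF μ i) (qF μ j)) n) :=
  sMuP_giambelli_general a μ n
end
end

section
/- Let μ be a nonempty partition, p = μ_1 − 1 and q = μ'_1 − 1, where μ' is the conjugate partition. If a and b are doubly infinite sequences of complex numbers with a_i = b_i for every integer i with 1 − q ≤ i ≤ p, then s_{μ;a}(x_1,…,x_m; y_1,…,y_n) = s_{μ;b}(x_1,…,x_m; y_1,…,y_n) in ℂ[x_1,…,x_m, y_1,…,y_n] for all m, n ≥ 0; i.e., s_{μ;a} depends only on the parameters a_i with 1 − q ≤ i ≤ p. -/
open MvPolynomial Finset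

noncomputable section

/-- the supersymmetric `h_k(x;y) = Σ_{r+s=k} h_r(x) e_s(y)` in `ℂ[x_1..x_m, y_1..y_n]`;
it is `0` for `k < 0`. -/
def hSup (m n : ℕ) (k : ℤ) : MvPolynomial (Fin m ⊕ Fin n) ℂ :=
  if k < 0 then 0 else
  ∑ rs ∈ Finset.HasAntidiagonal.antidiagonal k.toNat,
    (rename Sum.inl (hsymm (Fin m) ℂ rs.1)) * (rename Sum.inr (esymm (Fin n) ℂ rs.2))

/-- `h_{k;a}(x;y)` in `ℂ[x_1..x_m, y_1..y_n]`. -/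
def hka (a : ℤ → ℂ) (m n : ℕ) (k : ℤ) : MvPolynomial (Fin m ⊕ Fin n) ℂ :=
  if k < 0 then 0 else if k = 0 then 1 else
  ∑ i ∈ Finset.Icc 1 k.toNat,
    C ((-1) ^ (k.toNat - i) * eSeq a (k.toNat - 1) (k.toNat - i)) * hSup m n i

/-- the supersymmetric multiparameter Schur function `s_{μ;a}(x_1..x_m ; y_1..y_n)`,
defined as `det [h_{μ_i - i + j; τ^{1-j} a}(x;y)]` of size `ℓ(μ) × ℓ(μ)`. -/
def sMu (a : ℤ → ℂ) (μ : YoungDiagram) (m n : ℕ) : MvPolynomial (Fin m ⊕ Fin n) ℂ :=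
  Matrix.det (Matrix.of fun i j : Fin (μ.colLen 0) =>
    hka (shiftSeq (-(j : ℤ)) a) m n ((μ.rowLen i : ℤ) - i + j))

theorem eSeq_congr {a b : ℤ → ℂ} {num : ℕ} (h : ∀ i : ℤ, 1 ≤ i → i ≤ num → a i = b i)
    (deg : ℕ) : eSeq a num deg = eSeq b num deg := by
  refine Finset.sum_congr rfl fun S hS => Finset.prod_congr rfl fun c hc => h _ (by omega) ?_
  have := Finset.mem_range.mp ((Finset.mem_powersetCard.mp hS).1 hc)
  omega

theorem hka_congr {a b : ℤ → ℂ} {k : ℤ} (h : ∀ i : ℤ, 1 ≤ i → i ≤ k - 1 → a i = b i)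
    (m n : ℕ) : hka a m n k = hka b m n k := by
  unfold hka
  split_ifs with hneg hzero
  · rfl
  · rfl
  · refine Finset.sum_congr rfl fun t _ => ?_
    rw [eSeq_congr (fun i hi₁ hi₂ => h i hi₁ (by omega))]

theorem sMu_depends_on_finitely_many_parameters_general (a b : ℤ → ℂ) (μ : YoungDiagram)
    (hab : ∀ i : ℤ, 1 - ((μ.colLen 0 : ℤ) - 1) ≤ i → i ≤ (μ.rowLen 0 : ℤ) - 1 → a i = b i)
    (m n : ℕ) :
    sMu a μ m n = sMu b μ m n := by
  refine congrArg Matrix.det (Matrix.ext fun i j => hka_congr (fun c hc₁ hc₂ => ?_) m n)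
  -- Entry `(i, j)` only reads `a (c - j)` for `1 ≤ c < μ_i - i + j`, and `1 - j ≥ 1 - q`,
  -- `μ_i - i - 1 ≤ p`.
  have hj := j.isLt
  have hrow : μ.rowLen i ≤ μ.rowLen 0 := μ.rowLen_anti 0 i (Nat.zero_le i)
  exact hab _ (by omega) (by omega)

/-- For a nonempty partition `μ` with `p = μ_1 - 1` and `q = μ'_1 - 1`,
the function `s_{μ;a}` depends only on the parameters `a_i` with `1 - q ≤ i ≤ p`. -/
theorem sMu_depends_on_finitely_many_parameters (a b : ℤ → ℂ) (μ : YoungDiagram)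
    (hμ : μ ≠ ⊥)
    (hab : ∀ i : ℤ, 1 - ((μ.colLen 0 : ℤ) - 1) ≤ i → i ≤ (μ.rowLen 0 : ℤ) - 1 → a i = b i)
    (m n : ℕ) :
    sMu a μ m n = sMu b μ m n :=
  sMu_depends_on_finitely_many_parameters_general a b μ hab m n
end
end

section
/- Generating series for the multiparameter complete homogeneous functions: in the ring of formal power series in t over ℂ[x_1,…,x_n], 1 + Σ_{k ≥ 1} h_{k;a} · t^k · ∏_{i=1}^{k} (1 − a_i t)^{−1} = Σ_{k ≥ 0} h_k t^k, where (1 − c t)^{−1} denotes the geometric series Σ_{r ≥ 0} c^r t^r. (The sum over k converges coefficientwise, the k-th term being divisible by t^k.) -/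
open MvPolynomial Finset

noncomputable section

/- We work in the ring `(ℂ[x_1,…,x_n])[[t]]` of formal power series over `ℂ[x_1,…,x_n]`. -/

/-- the geometric series `(1 - c t)⁻¹ = Σ_{r ≥ 0} c^r t^r` for a scalar `c : ℂ`. -/
def geomSer (n : ℕ) (c : ℂ) : PowerSeries (MvPolynomial (Fin n) ℂ) :=
  PowerSeries.mk fun r => MvPolynomial.C (c ^ r)

/-- `H(t) = Σ_{k ≥ 0} h_k t^k`. -/
def Hser (n : ℕ) : PowerSeries (MvPolynomial (Fin n) ℂ) :=
  PowerSeries.mk fun k => hsymm (Fin n) ℂ k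

/-- the `k`-th term `h_{k;a} · t^k · ∏_{i=1}^k (1 - a_i t)⁻¹` of the generating series. -/
def hTerm (a : ℤ → ℂ) (n : ℕ) (k : ℕ) : PowerSeries (MvPolynomial (Fin n) ℂ) :=
  PowerSeries.C (hkaP a n (k : ℤ)) * PowerSeries.X ^ k *
    ∏ i ∈ Finset.Icc 1 k, geomSer n (a (i : ℤ))

/-! Write `H = Σ h_k t^k` and `E_K = ∏_{i ≤ K} (1 - a_i t)`. After multiplication by `E_K`, the
claim up to `t^K` becomes the congruence
`H · E_K ≡ Σ_{k ≤ K} h_{k;a} t^k ∏_{k < i ≤ K} (1 - a_i t) (mod t^{K+1})`.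
It follows by induction on `K`: the step multiplies the remainder by `1 - a_{K+1} t`, and the only
coefficient left to cancel is the `t^{K+1}` coefficient of `H · E_K`. The coefficients of `E_K` are
the signed elementary symmetric functions of `a_1, …, a_K`, so this coefficient is
`Σ_i (-1)^{K+1-i} e_{K+1-i}(a_1, …, a_K) h_i = h_{K+1;a}`. The same induction expands any power
series in the basis `t^k ∏_{i ≤ k} (1 - a_i t)⁻¹`. -/

open PowerSeries

theorem Finset.prod_Icc_one_eq_prod_range {M : Type*} [CommMonoid M] (f : ℕ → M) (k : ℕ) :
    ∏ i ∈ Icc 1 k, f i = ∏ i ∈ range k, f (i + 1) := by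
  rw [show Icc 1 k = Ico 1 (k + 1) from rfl, prod_Ico_eq_prod_range, Nat.add_sub_cancel]
  simp only [add_comm 1]

namespace PowerSeries

variable {R : Type*} [CommRing R]

theorem coeff_prod_one_sub_C_mul_X {ι : Type*} (s : Finset ι) (c : ι → R) (q : ℕ) :
    coeff q (∏ i ∈ s, (1 - C (c i) * X)) =
      (-1) ^ q * ∑ t ∈ s.powersetCard q, ∏ i ∈ t, c i := by
  classical
  have hterm (t : Finset ι) :
      ∏ i ∈ t, -(C (c i) * X) = C ((-1) ^ #t * ∏ i ∈ t, c i) * X ^ #t := by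
    rw [prod_neg, prod_mul_distrib, prod_const, map_mul, map_pow, map_neg, map_one, map_prod]
    ring
  simp_rw [sub_eq_add_neg, prod_one_add, hterm, map_sum, coeff_C_mul_X_pow,
    powersetCard_eq_filter, sum_filter, mul_sum]
  refine sum_congr rfl fun t _ => ?_
  rcases eq_or_ne #t q with rfl | h
  · simp
  · simp [h, h.symm]

theorem coeff_prod_one_sub_C_mul_X_of_card_lt {ι : Type*} {s : Finset ι} (c : ι → R) {q : ℕ}
    (hq : #s < q) : coeff q (∏ i ∈ s, (1 - C (c i) * X)) = 0 := by
  rw [coeff_prod_one_sub_C_mul_X, powersetCard_eq_empty.mpr hq, sum_empty, mul_zero]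

section Expansion

variable (H : R⟦X⟧) (c : ℕ → R)

/-- The coefficients in `H = Σ_k b_k X^k ∏_{i < k} (1 - c_i X)⁻¹`
(see `X_pow_succ_dvd_sub_sum_expansion`). -/
def expansionCoeff (k : ℕ) : R :=
  coeff k (H * ∏ i ∈ range (k - 1), (1 - C (c i) * X))

def expansionRemainder (K : ℕ) : R⟦X⟧ :=
  H * ∏ i ∈ range K, (1 - C (c i) * X) -
    ∑ k ∈ range (K + 1), C (expansionCoeff H c k) * X ^ k * ∏ i ∈ Ico k K, (1 - C (c i) * X)

theorem expansionRemainder_succ (K : ℕ) :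
    expansionRemainder H c (K + 1) = expansionRemainder H c K * (1 - C (c K) * X) -
      C (expansionCoeff H c (K + 1)) * X ^ (K + 1) := by
  have htail : ∀ k ∈ range (K + 1), C (expansionCoeff H c k) * X ^ k *
      ∏ i ∈ Ico k (K + 1), (1 - C (c i) * X) = C (expansionCoeff H c k) * X ^ k *
      (∏ i ∈ Ico k K, (1 - C (c i) * X)) * (1 - C (c K) * X) := fun k hk => by
    rw [prod_Ico_succ_top (Nat.lt_succ_iff.mp (mem_range.mp hk))]
    ring
  rw [expansionRemainder, sum_range_succ, sum_congr rfl htail, prod_range_succ, Ico_self,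
    prod_empty, mul_one, expansionRemainder, ← sum_mul]
  ring

theorem coeff_succ_expansionRemainder (K : ℕ) :
    coeff (K + 1) (expansionRemainder H c K) = expansionCoeff H c (K + 1) := by
  have htail : ∀ k ∈ range (K + 1), coeff (K + 1) (C (expansionCoeff H c k) * X ^ k *
      ∏ i ∈ Ico k K, (1 - C (c i) * X)) = 0 := fun k hk => by
    have hk : k ≤ K := Nat.lt_succ_iff.mp (mem_range.mp hk)
    rw [mul_assoc, coeff_C_mul, coeff_X_pow_mul', if_pos (by omega),
      coeff_prod_one_sub_C_mul_X_of_card_lt _ (by rw [Nat.card_Ico]; omega), mul_zero]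
  rw [expansionRemainder, map_sub, map_sum, sum_eq_zero htail, sub_zero, expansionCoeff,
    Nat.add_sub_cancel]

theorem X_pow_succ_dvd_expansionRemainder (K : ℕ) :
    X ^ (K + 1) ∣ expansionRemainder H c K := by
  induction K with
  | zero =>
    rw [zero_add, pow_one, X_dvd_iff]
    simp [expansionRemainder, expansionCoeff]
  | succ K ih =>
    obtain ⟨V, hV⟩ := ih
    have hV₀ : constantCoeff V = expansionCoeff H c (K + 1) := by
      rw [← coeff_succ_expansionRemainder, hV, coeff_X_pow_mul', if_pos le_rfl, Nat.sub_self,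
        coeff_zero_eq_constantCoeff_apply]
    have hX : X ∣ V * (1 - C (c K) * X) - C (expansionCoeff H c (K + 1)) := by
      simp [X_dvd_iff, hV₀]
    have hfactor : X ^ (K + 1) * V * (1 - C (c K) * X) -
        C (expansionCoeff H c (K + 1)) * X ^ (K + 1) =
        X ^ (K + 1) * (V * (1 - C (c K) * X) - C (expansionCoeff H c (K + 1))) := by ring
    rw [expansionRemainder_succ, hV, hfactor, pow_succ X (K + 1)]
    exact mul_dvd_mul_left _ hX

theorem X_pow_succ_dvd_sub_sum_expansion (g : ℕ → R⟦X⟧)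
    (hg : ∀ i, g i * (1 - C (c i) * X) = 1) (K : ℕ) :
    X ^ (K + 1) ∣ H - ∑ k ∈ range (K + 1), C (expansionCoeff H c k) * X ^ k *
      ∏ i ∈ range k, g i := by
  have hinv (s : Finset ℕ) : (∏ i ∈ s, g i) * ∏ i ∈ s, (1 - C (c i) * X) = 1 := by
    rw [← prod_mul_distrib, prod_eq_one fun i _ => hg i]
  have hterm : ∀ k ∈ range (K + 1), (∏ i ∈ range K, g i) *
      (C (expansionCoeff H c k) * X ^ k * ∏ i ∈ Ico k K, (1 - C (c i) * X)) =
        C (expansionCoeff H c k) * X ^ k * ∏ i ∈ range k, g i := fun k hk => by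
    rw [← prod_range_mul_prod_Ico g (Nat.lt_succ_iff.mp (mem_range.mp hk))]
    linear_combination (C (expansionCoeff H c k) * X ^ k * ∏ i ∈ range k, g i) * hinv (Ico k K)
  have hcleared : H - ∑ k ∈ range (K + 1), C (expansionCoeff H c k) * X ^ k *
      ∏ i ∈ range k, g i = (∏ i ∈ range K, g i) * expansionRemainder H c K := by
    rw [expansionRemainder, mul_sub, mul_sum, sum_congr rfl hterm]
    linear_combination (-H) * hinv (range K)
  rw [hcleared]
  exact dvd_mul_of_dvd_right (X_pow_succ_dvd_expansionRemainder H c K) _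

end Expansion

end PowerSeries

theorem geomSer_mul_one_sub (n : ℕ) (c : ℂ) :
    geomSer n c * (1 - PowerSeries.C (MvPolynomial.C c) * PowerSeries.X) = 1 := by
  have hrescale : geomSer n c = rescale (MvPolynomial.C c) (mk 1) := by
    ext r
    simp [geomSer, coeff_rescale]
  rw [hrescale, ← rescale_X, ← map_one (rescale _), ← map_sub, ← map_mul,
    mk_one_mul_one_sub_eq_one, map_one]

theorem coeff_prod_one_sub_eq_eSeq (a : ℤ → ℂ) (n K q : ℕ) :
    PowerSeries.coeff q (∏ i ∈ range K,
      (1 - PowerSeries.C (MvPolynomial.C (a ((i : ℤ) + 1))) * PowerSeries.X) :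
        (MvPolynomial (Fin n) ℂ)⟦X⟧) = MvPolynomial.C ((-1) ^ q * eSeq a K q) := by
  simp [coeff_prod_one_sub_C_mul_X, eSeq]

theorem hkaP_eq_expansionCoeff (a : ℤ → ℂ) (n k : ℕ) :
    hkaP a n k = expansionCoeff (Hser n) (fun i : ℕ => MvPolynomial.C (a ((i : ℤ) + 1))) k := by
  cases k with
  | zero => simp [hkaP, expansionCoeff, Hser]
  | succ k =>
    rw [hkaP, if_neg (by omega), if_neg (by omega), Int.toNat_natCast, expansionCoeff,
      PowerSeries.coeff_mul, Nat.sum_antidiagonal_eq_sum_range_succ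
        (fun i j => PowerSeries.coeff i (Hser n) * PowerSeries.coeff j _),
      sum_range_eq_add_Ico _ (Nat.succ_pos _)]
    have hvanish : eSeq a k (k + 1) = 0 := by
      rw [eSeq, powersetCard_eq_empty.mpr (by simp), sum_empty]
    simp only [Hser, coeff_mk, coeff_prod_one_sub_eq_eSeq, Nat.add_sub_cancel, Nat.sub_zero,
      hvanish, mul_zero, map_zero, zero_add]
    exact sum_congr rfl fun _ _ => mul_comm _ _

theorem hTerm_eq_expansion (a : ℤ → ℂ) (n k : ℕ) :
    hTerm a n k = PowerSeries.C (expansionCoeff (Hser n)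
      (fun i : ℕ => MvPolynomial.C (a ((i : ℤ) + 1))) k) * PowerSeries.X ^ k *
        ∏ i ∈ range k, geomSer n (a ((i : ℤ) + 1)) := by
  rw [hTerm, ← hkaP_eq_expansionCoeff,
    prod_Icc_one_eq_prod_range (fun i : ℕ => geomSer n (a i))]
  simp only [Nat.cast_add_one]

theorem one_add_sum_hTerm (a : ℤ → ℂ) (n K : ℕ) :
    1 + ∑ k ∈ Icc 1 K, hTerm a n k = ∑ k ∈ range (K + 1), hTerm a n k := by
  rw [sum_range_eq_add_Ico _ (Nat.succ_pos _)]
  congr 1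
  simp [hTerm, hkaP]

/-- **generating series for `h_{k;a}`.**
`1 + Σ_{k ≥ 1} h_{k;a} t^k ∏_{i=1}^k (1 - a_i t)⁻¹ = Σ_{k ≥ 0} h_k t^k`.
The `k`-th term is divisible by `t^k`, so the sum converges coefficientwise; accordingly,
every coefficient of any sufficiently large finite partial sum of the left-hand side
agrees with the corresponding coefficient of `H(t)`. -/
theorem hka_generating_series (a : ℤ → ℂ) (n : ℕ) :
    (∀ k : ℕ, 1 ≤ k → (PowerSeries.X : PowerSeries (MvPolynomial (Fin n) ℂ)) ^ k ∣
      hTerm a n k) ∧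
    (∀ α K : ℕ, α ≤ K →
      PowerSeries.coeff α (1 + ∑ k ∈ Finset.Icc 1 K, hTerm a n k) =
      PowerSeries.coeff α (Hser n)) := by
  refine ⟨fun k _ => ?_, fun α K hαK => ?_⟩
  · rw [hTerm]
    exact dvd_mul_of_dvd_left (dvd_mul_left _ _) _
  have hdvd := X_pow_succ_dvd_sub_sum_expansion (Hser n)
    (fun i : ℕ => MvPolynomial.C (a ((i : ℤ) + 1)))
    (fun i : ℕ => geomSer n (a ((i : ℤ) + 1))) (fun i => geomSer_mul_one_sub n _) K
  rw [← sum_congr rfl fun k _ => hTerm_eq_expansion a n k, ← one_add_sum_hTerm] at hdvd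
  rw [eq_comm, ← sub_eq_zero, ← map_sub]
  exact X_pow_dvd_iff.mp hdvd α (Nat.lt_succ_of_le hαK)
end
end
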